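/- arXiv:2405.12992 — 2 statements merged into one kernel-verified Lean document; each statement's English description precedes it below -/
import Mathlib

section
/- Let K ⊆ ℝ^d be a nonempty MW-convex set and let π : ℝ^d → ℝ^d be a linear projection (a linear map with π ∘ π = π). Then rec(π(K)) = π(rec(K)). -/
open Pointwise

/-- The recession cone of a set `K`. -/
def recCone {E : Type*} [AddCommGroup E] [Module ℝ E] (K : Set E) : Set E :=
  {z | ∀ w ∈ K, ∀ l : ℝ, 0 ≤ l → w + l • z ∈ K}

/-- A set is MW-convex if it is closed, convex, and is the sum of a compact convex set
and its recession cone. -/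
def IsMWConvex {E : Type*} [NormedAddCommGroup E] [NormedSpace ℝ E] (K : Set E) : Prop :=
  IsClosed K ∧ Convex ℝ K ∧
    ∃ K' : Set E, IsCompact K' ∧ Convex ℝ K' ∧ K = K' + recCone K

/-!
Since `π '' K = π '' K' + π '' rec K`, it suffices to show that `rec (B + C) = C` for a nonempty
compact set `B` and a convex cone `C` (which need not be closed) in a finite-dimensional space.
If `z ∈ rec (B + C)`, then `b + n • z ∈ B + C` for all `n`, so dividing by `n` shows
`z ∈ closure C`. If `z ∉ C`, a functional `f ≤ 0` on `C` supports `C` at `z` and is not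
identically zero on `C`; the face `B ∩ {f = max_B f}` of `B` and the face `C ∩ ker f` of `C` still
satisfy `z ∈ rec (B' + C')`, and `C ∩ ker f` spans a smaller space, so we conclude by induction on
the dimension of the span of `C`.
-/

open Filter Topology Submodule

section Cone

variable {E : Type*} [AddCommGroup E] [Module ℝ E]

def recPointedCone (K : Set E) : PointedCone ℝ E where
  carrier := recCone K
  add_mem' {x y} hx hy w hw l hl := by
    simpa [smul_add, add_assoc] using hy _ (hx w hw l hl) l hl
  zero_mem' w hw _ _ := by simpa using hw
  smul_mem' t x hx w hw l hl := by
    show w + l • ((t : ℝ) • x) ∈ K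
    simpa only [smul_smul] using hx w hw (l * t) (mul_nonneg hl t.2)

lemma coe_recPointedCone (K : Set E) : (recPointedCone K : Set E) = recCone K := rfl

lemma coe_subset_recCone_add (B : Set E) (C : PointedCone ℝ E) :
    (C : Set E) ⊆ recCone (B + (C : Set E)) := by
  rintro z hz _ ⟨b, hb, c, hc, rfl⟩ l hl
  exact ⟨b, hb, c + l • z, C.add_mem hc (C.smul_mem hl hz), by rw [add_assoc]⟩

lemma mem_recCone_add_inf_ker {B : Set E} {C : PointedCone ℝ E} {f : E →ₗ[ℝ] ℝ} {β : ℝ}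
    (hB : ∀ b ∈ B, f b ≤ β) (hC : ∀ c ∈ C, f c ≤ 0) {z : E} (hfz : f z = 0)
    (hz : z ∈ recCone (B + (C : Set E))) :
    z ∈ recCone ((B ∩ f ⁻¹' {β}) +
      ((C ⊓ PointedCone.ofSubmodule (LinearMap.ker f) : PointedCone ℝ E) : Set E)) := by
  rintro _ ⟨b, ⟨hbB, hfb⟩, c, ⟨hcC, hfc⟩, rfl⟩ l hl
  obtain ⟨b', hb', c', hc', he⟩ := hz (b + c) ⟨b, hbB, c, hcC, rfl⟩ l hl
  replace he : b' + c' = b + c + l • z := he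
  have hsum : f b' + f c' = β := by
    rw [← map_add, he, map_add, map_add, map_smul, hfb, hfc, hfz]
    simp
  have hfb' := hB b' hb'
  have hfc' := hC c' hc'
  refine ⟨b', ⟨hb', ?_⟩, c', ⟨hc', ?_⟩, he⟩
  · show f b' = β
    linarith
  · show f c' = 0
    linarith

lemma span_inf_ker_lt_span {C : PointedCone ℝ E} {f : E →ₗ[ℝ] ℝ} {c : E} (hc : c ∈ C)
    (hfc : f c ≠ 0) :
    span ℝ ((C ⊓ PointedCone.ofSubmodule (LinearMap.ker f) : PointedCone ℝ E) : Set E) <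
      span ℝ (C : Set E) :=
  SetLike.lt_iff_le_and_exists.2 ⟨span_mono fun _ hx ↦ hx.1, c, subset_span hc,
    fun h ↦ hfc (span_le.2 (fun _ hx ↦ hx.2) h)⟩

end Cone

section Normed

variable {E : Type*} [NormedAddCommGroup E] [NormedSpace ℝ E]

lemma mem_closure_of_mem_recCone_add {B : Set E} (hB : Bornology.IsBounded B)
    (hBne : B.Nonempty) {C : PointedCone ℝ E} {z : E} (hz : z ∈ recCone (B + (C : Set E))) :
    z ∈ closure (C : Set E) := by
  obtain ⟨b₀, hb₀⟩ := hBne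
  obtain ⟨R, hR⟩ := isBounded_iff_forall_norm_le.1 (hB.sub hB)
  have hmem (n : ℕ) : b₀ + (n : ℝ) • z ∈ B + (C : Set E) := by
    simpa using hz (b₀ + 0) (Set.add_mem_add hb₀ C.zero_mem) n n.cast_nonneg
  choose b hb c hc hbc using hmem
  have hlim : Tendsto (fun n : ℕ ↦ (n : ℝ)⁻¹ • c n) atTop (𝓝 z) := by
    have hbdd : Tendsto (fun n : ℕ ↦ (n : ℝ)⁻¹ • (b₀ - b n)) atTop (𝓝 0) :=
      (tendsto_inv_atTop_zero.comp tendsto_natCast_atTop_atTop).zero_smul_isBoundedUnder_le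
        (isBoundedUnder_of ⟨R, fun n ↦ hR _ (Set.sub_mem_sub hb₀ (hb n))⟩)
    refine (by simpa using tendsto_const_nhds.add hbdd :
      Tendsto (fun n : ℕ ↦ z + (n : ℝ)⁻¹ • (b₀ - b n)) atTop (𝓝 z)).congr' ?_
    filter_upwards [eventually_ne_atTop 0] with n hn
    have hcn : c n = (n : ℝ) • z + (b₀ - b n) := by
      linear_combination (norm := module) hbc n
    rw [hcn, smul_add, smul_smul, inv_mul_cancel₀ (Nat.cast_ne_zero.2 hn), one_smul]
  exact mem_closure_of_tendsto hlim (Eventually.of_forall fun n ↦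
    C.smul_mem (inv_nonneg.2 n.cast_nonneg) (hc n))

variable [FiniteDimensional ℝ E]

lemma PointedCone.interior_nonempty_of_span_eq_top {C : PointedCone ℝ E}
    (hspan : span ℝ (C : Set E) = ⊤) : (interior (C : Set E)).Nonempty := by
  rw [C.convex.interior_nonempty_iff_affineSpan_eq_top,
    AffineSubspace.affineSpan_eq_top_iff_vectorSpan_eq_top_of_nonempty ℝ E E ⟨0, C.zero_mem⟩,
    vectorSpan_eq_span_vsub_set_right ℝ C.zero_mem]
  simpa using hspan

lemma PointedCone.exists_support_of_span_eq_top {C : PointedCone ℝ E}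
    (hspan : span ℝ (C : Set E) = ⊤) {z : E} (hzc : z ∈ closure (C : Set E)) (hz : z ∉ C) :
    ∃ f : E →ₗ[ℝ] ℝ, (∀ c ∈ C, f c ≤ 0) ∧ f z = 0 ∧ ∃ c ∈ C, f c < 0 := by
  obtain ⟨f, u, hf0, hfC, hfz⟩ := geometric_hahn_banach_of_nonempty_interior C.convex
    (convex_singleton z) (Set.disjoint_singleton_right.2 fun h ↦ hz (interior_subset h))
    (interior_nonempty_of_span_eq_top hspan) (Set.singleton_nonempty z)
  have hu : 0 ≤ u := by simpa using hfC 0 C.zero_mem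
  have hfC' : ∀ c ∈ C, f c ≤ 0 := by
    intro c hc
    by_contra! hpos
    have := hfC (((u + 1) / f c) • c) (C.smul_mem (by positivity) hc)
    rw [map_smul, smul_eq_mul, div_mul_cancel₀ _ hpos.ne'] at this
    linarith
  have hfz' : f z ≤ 0 :=
    closure_minimal hfC' (isClosed_le f.continuous continuous_const) hzc
  refine ⟨f, hfC', le_antisymm hfz' (hu.trans (hfz z rfl)), ?_⟩
  by_contra! hge
  exact hf0 (ContinuousLinearMap.coe_injective
    (LinearMap.ext_on hspan fun c hc ↦ le_antisymm (hfC' c hc) (hge c hc)))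

lemma PointedCone.exists_support {C : PointedCone ℝ E} {z : E} (hzc : z ∈ closure (C : Set E))
    (hz : z ∉ C) : ∃ f : E →ₗ[ℝ] ℝ, (∀ c ∈ C, f c ≤ 0) ∧ f z = 0 ∧ ∃ c ∈ C, f c < 0 := by
  set V := span ℝ (C : Set E)
  have hCV : (C : Set E) ⊆ V := Submodule.subset_span
  have hzV : z ∈ V := closure_minimal hCV V.closed_of_finiteDimensional hzc
  have hzc' : (⟨z, hzV⟩ : V) ∈ closure ((C.comap V.subtype : PointedCone ℝ V) : Set V) := by
    rwa [closure_subtype, PointedCone.coe_comap, coe_subtype,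
      Set.image_preimage_eq_of_subset (by simpa using hCV)]
  obtain ⟨g, hgC, hgz, c, hc, hgc⟩ :=
    exists_support_of_span_eq_top span_span_coe_preimage hzc' hz
  obtain ⟨f, hf⟩ := LinearMap.exists_extend g
  have hfg (v : V) : f v = g v := congr($hf v)
  refine ⟨f, fun c hc ↦ ?_, ?_, c, hc, ?_⟩
  · simpa [hfg ⟨c, hCV hc⟩] using hgC ⟨c, hCV hc⟩ hc
  · simpa [hfg ⟨z, hzV⟩] using hgz
  · simpa [hfg ⟨c, hCV hc⟩] using hgc

theorem recCone_add_pointedCone_subset {B : Set E} (hB : IsCompact B) (hBne : B.Nonempty)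
    (C : PointedCone ℝ E) : recCone (B + (C : Set E)) ⊆ C := by
  induction hn : Module.finrank ℝ (span ℝ (C : Set E)) using Nat.strong_induction_on
    generalizing B C with
  | _ n ih =>
  intro z hz
  by_contra hzC
  obtain ⟨f, hfC, hfz, c, hc, hfc⟩ :=
    C.exists_support (mem_closure_of_mem_recCone_add hB.isBounded hBne hz) hzC
  have hf : Continuous f := f.continuous_of_finiteDimensional
  obtain ⟨b, hb, hbmax⟩ := hB.exists_isMaxOn hBne hf.continuousOn
  have hlt := hn ▸ finrank_lt_finrank_of_lt (span_inf_ker_lt_span hc hfc.ne)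
  have hface := mem_recCone_add_inf_ker (fun b' hb' ↦ hbmax hb') hfC hfz hz
  exact hzC (ih _ hlt (hB.inter_right (isClosed_singleton.preimage hf)) ⟨b, hb, rfl⟩ _ rfl
    hface).1

theorem recCone_add_pointedCone {B : Set E} (hB : IsCompact B) (hBne : B.Nonempty)
    (C : PointedCone ℝ E) : recCone (B + (C : Set E)) = C :=
  (recCone_add_pointedCone_subset hB hBne C).antisymm (coe_subset_recCone_add B C)

end Normed

theorem recCone_image_eq_image_recCone_general
    {d : ℕ} (K : Set (EuclideanSpace ℝ (Fin d))) (hne : K.Nonempty) (hK : IsMWConvex K)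
    (π : EuclideanSpace ℝ (Fin d) →ₗ[ℝ] EuclideanSpace ℝ (Fin d)) :
    recCone (π '' K) = π '' recCone K := by
  obtain ⟨-, -, K', hK'c, -, hKeq⟩ := hK
  have hK'ne : K'.Nonempty := (hKeq ▸ hne).of_add_left
  have himage : π '' K = π '' K' + ((recPointedCone K).map π : Set _) := by
    rw [PointedCone.coe_map, coe_recPointedCone, ← Set.image_add, ← hKeq]
  rw [himage, recCone_add_pointedCone (hK'c.image π.continuous_of_finiteDimensional)
    (hK'ne.image π), PointedCone.coe_map, coe_recPointedCone]

theorem recCone_image_eq_image_recCone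
    {d : ℕ} (K : Set (EuclideanSpace ℝ (Fin d))) (hne : K.Nonempty) (hK : IsMWConvex K)
    (π : EuclideanSpace ℝ (Fin d) →ₗ[ℝ] EuclideanSpace ℝ (Fin d))
    (hproj : ∀ x, π (π x) = π x) :
    recCone (π '' K) = π '' recCone K :=
  recCone_image_eq_image_recCone_general K hne hK π
end

section
/- Let E be a Euclidean space of dimension 2, let K ⊆ E × E be MW-convex, and let u = (u_n)_{n∈ℕ} be a sequence in E with (u_n, u_{n+1}) ∈ K for all n ∈ ℕ. Assume that D_u is nonempty and that for all x ∈ Cone(D_u), if (0, x) ∈ rec(K) then x = 0. Then for every x ∈ Cone(D_u) there exists s ∈ Cone(D_u) such that (x, s) ∈ rec(K). -/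
open Pointwise

open Filter Topology

/-- The set of principal directions of a sequence: unit vectors `z` such that some
subsequence has norm tending to infinity and direction tending to `z`. -/
def principalDirections {E : Type*} [NormedAddCommGroup E] [InnerProductSpace ℝ E]
    (u : ℕ → E) : Set E :=
  {z | ‖z‖ = 1 ∧ ∃ φ : ℕ → ℕ, StrictMono φ ∧
    Tendsto (fun n => ‖u (φ n)‖) atTop atTop ∧
    Tendsto (fun n => ‖u (φ n)‖⁻¹ • u (φ n)) atTop (nhds z)}

/-- The conic hull of a set: all finite nonnegative linear combinations of its elements
(including `0`). -/
def coneHull {E : Type*} [AddCommGroup E] [Module ℝ E] (S : Set E) : Set E :=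
  {y | ∃ (m : ℕ) (c : Fin m → ℝ) (x : Fin m → E),
    (∀ i, 0 ≤ c i) ∧ (∀ i, x i ∈ S) ∧ y = ∑ i, c i • x i}

/-! Fix a principal direction `z`, realised by a subsequence `u ∘ φ`. The normalised pairs
`(u (φ n), u (φ n + 1))` have, by compactness of the unit sphere, a limit point `d = (d₁, d₂)` of
norm one, and `d` lies in the asymptotic cone of `K`, hence in `rec K` since `K` is closed and
convex. As `u (φ n)` points towards `z`, `d₁ = ‖d₁‖ • z`; if `d₂ ≠ 0` the successors
`u (φ n + 1)` escape in the direction of `d₂`, so `d₂ ∈ Cone(D_u)`. Now `d₁ = 0` would give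
`(0, d₂) ∈ rec K`, so `d₂ = 0` by hypothesis, contradicting `‖d‖ = 1`; dividing `d` by `‖d₁‖`
handles `z`. Sums and nonnegative multiples of such pairs then handle all of `Cone(D_u)`. -/

section ConeHull

variable {F : Type*} [AddCommGroup F] [Module ℝ F] {S : Set F}

lemma zero_mem_coneHull (S : Set F) : (0 : F) ∈ coneHull S :=
  ⟨0, Fin.elim0, Fin.elim0, Fin.rec0, Fin.rec0, by simp⟩

lemma mem_coneHull_of_mem {z : F} (hz : z ∈ S) : z ∈ coneHull S :=
  ⟨1, fun _ => 1, fun _ => z, fun _ => zero_le_one, fun _ => hz, by simp⟩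

lemma smul_mem_coneHull {r : ℝ} (hr : 0 ≤ r) {y : F} (hy : y ∈ coneHull S) :
    r • y ∈ coneHull S := by
  obtain ⟨m, c, x, hc, hx, rfl⟩ := hy
  exact ⟨m, fun i => r * c i, x, fun i => mul_nonneg hr (hc i), hx, by
    simp [Finset.smul_sum, mul_smul]⟩

lemma add_mem_coneHull {y₁ y₂ : F} (h₁ : y₁ ∈ coneHull S) (h₂ : y₂ ∈ coneHull S) :
    y₁ + y₂ ∈ coneHull S := by
  obtain ⟨m, c, x, hc, hx, rfl⟩ := h₁
  obtain ⟨k, c', x', hc', hx', rfl⟩ := h₂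
  refine ⟨m + k, Fin.append c c', Fin.append x x', ?_, ?_, by simp [Fin.sum_univ_add]⟩
  · exact Fin.addCases (by simpa using hc) (by simpa using hc')
  · exact Fin.addCases (by simpa using hx) (by simpa using hx')

lemma coneHull_induction {P : F → Prop} (zero : P 0) (add : ∀ x y, P x → P y → P (x + y))
    (smul : ∀ (r : ℝ) x, 0 ≤ r → P x → P (r • x)) (mem : ∀ x ∈ S, P x) :
    ∀ x ∈ coneHull S, P x := by
  rintro _ ⟨m, c, x, hc, hx, rfl⟩
  exact Finset.sum_induction _ P add zero fun i _ => smul _ _ (hc i) (mem _ (hx i))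

end ConeHull

section RecCone

variable {F : Type*} [AddCommGroup F] [Module ℝ F] {K : Set F}

lemma zero_mem_recCone (K : Set F) : (0 : F) ∈ recCone K := fun w hw l _ => by simpa using hw

lemma smul_mem_recCone {r : ℝ} (hr : 0 ≤ r) {y : F} (hy : y ∈ recCone K) :
    r • y ∈ recCone K := fun w hw l hl => by
  simpa [smul_smul] using hy w hw (l * r) (mul_nonneg hl hr)

lemma add_mem_recCone {y₁ y₂ : F} (h₁ : y₁ ∈ recCone K) (h₂ : y₂ ∈ recCone K) :
    y₁ + y₂ ∈ recCone K := fun w hw l hl => by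
  simpa [smul_add, add_assoc] using h₂ _ (h₁ w hw l hl) l hl

lemma mem_recCone_of_mem_asymptoticCone [TopologicalSpace F] [IsTopologicalAddGroup F]
    [ContinuousSMul ℝ F] (hcl : IsClosed K) (hconv : Convex ℝ K) {v : F}
    (hv : v ∈ asymptoticCone ℝ K) : v ∈ recCone K := fun w hw l hl => by
  simpa [add_comm] using hconv.smul_vadd_mem_of_isClosed_of_mem_asymptoticCone hcl hl hv hw

end RecCone

lemma mem_asymptoticCone_of_tendsto {ι V : Type*} [AddCommGroup V] [Module ℝ V]
    [TopologicalSpace V] [IsTopologicalAddGroup V] [ContinuousSMul ℝ V]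
    {L : Filter ι} [L.NeBot] {s : Set V} {p : ι → V} (hp : ∀ i, p i ∈ s) {a : ι → ℝ}
    (ha : Tendsto a L atTop) {d : V} (hd : Tendsto (fun i => (a i)⁻¹ • p i) L (𝓝 d)) :
    d ∈ asymptoticCone ℝ s := by
  have hlim : Tendsto p L (AffineSpace.asymptoticNhds ℝ V d) := by
    refine (ha.atTop_smul_nhds_tendsto_asymptoticNhds hd).congr' ?_
    filter_upwards [ha.eventually_gt_atTop 0] with i hi
    exact smul_inv_smul₀ hi.ne' (p i)
  exact hlim.frequently (Frequently.of_forall hp)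

section Normed

variable {F : Type*} [NormedAddCommGroup F] [NormedSpace ℝ F]

lemma exists_subseq_tendsto_normalize [ProperSpace F] {q : ℕ → F}
    (hq : ∀ᶠ n in atTop, q n ≠ 0) :
    ∃ d : F, ‖d‖ = 1 ∧ ∃ ψ : ℕ → ℕ, StrictMono ψ ∧
      Tendsto (fun n => ‖q (ψ n)‖⁻¹ • q (ψ n)) atTop (𝓝 d) := by
  obtain ⟨d, hd, ψ, hψ, hlim⟩ := (isCompact_sphere (0 : F) 1).tendsto_subseq'
    (x := fun n => ‖q n‖⁻¹ • q n) (hq.mono fun n hn => by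
      simp [norm_smul, inv_mul_cancel₀ (norm_ne_zero_iff.2 hn)]).frequently
  exact ⟨d, by simpa using hd, ψ, hψ, hlim⟩

lemma eq_norm_smul_of_tendsto {ι : Type*} {L : Filter ι} [L.NeBot] {x : ι → F} {c : ι → ℝ}
    (hc : ∀ i, 0 ≤ c i) {z d : F} (hz : Tendsto (fun i => ‖x i‖⁻¹ • x i) L (𝓝 z))
    (hd : Tendsto (fun i => c i • x i) L (𝓝 d)) : d = ‖d‖ • z := by
  have hsplit : ∀ i, c i • x i = ‖c i • x i‖ • (‖x i‖⁻¹ • x i) := fun i => by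
    rcases eq_or_ne (x i) 0 with h | h
    · simp [h]
    · rw [smul_smul, norm_smul, Real.norm_of_nonneg (hc i), mul_assoc,
        mul_inv_cancel₀ (norm_ne_zero_iff.2 h), mul_one]
  exact tendsto_nhds_unique hd ((hd.norm.smul hz).congr fun i => (hsplit i).symm)

end Normed

section PrincipalDirections

variable {E : Type*} [NormedAddCommGroup E] [InnerProductSpace ℝ E] {u : ℕ → E}

lemma normalize_mem_principalDirections {χ : ℕ → ℕ} (hχ : StrictMono χ) {a : ℕ → ℝ}
    (ha : Tendsto a atTop atTop) {d : E} (hd0 : d ≠ 0)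
    (hd : Tendsto (fun n => (a n)⁻¹ • u (χ n)) atTop (𝓝 d)) :
    ‖d‖⁻¹ • d ∈ principalDirections u := by
  have hpos : ∀ᶠ n in atTop, 0 < a n := ha.eventually_gt_atTop 0
  have hratio : Tendsto (fun n => (a n)⁻¹ * ‖u (χ n)‖) atTop (𝓝 ‖d‖) := by
    refine hd.norm.congr' ?_
    filter_upwards [hpos] with n hn
    rw [norm_smul, Real.norm_of_nonneg (inv_nonneg.2 hn.le)]
  have hnorm : Tendsto (fun n => ‖u (χ n)‖) atTop atTop := by
    refine (ha.atTop_mul_pos (norm_pos_iff.2 hd0) hratio).congr' ?_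
    filter_upwards [hpos] with n hn
    rw [← mul_assoc, mul_inv_cancel₀ hn.ne', one_mul]
  refine ⟨by simp [norm_smul, hd0], χ, hχ, hnorm, ?_⟩
  refine ((hratio.inv₀ (norm_ne_zero_iff.2 hd0)).smul hd).congr' ?_
  filter_upwards [hpos] with n hn
  rw [smul_smul, mul_inv, inv_inv, mul_comm (a n), mul_assoc, mul_inv_cancel₀ hn.ne', mul_one]

lemma mem_coneHull_principalDirections_of_tendsto {χ : ℕ → ℕ} (hχ : StrictMono χ)
    {a : ℕ → ℝ} (ha : Tendsto a atTop atTop) {d : E}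
    (hd : Tendsto (fun n => (a n)⁻¹ • u (χ n)) atTop (𝓝 d)) :
    d ∈ coneHull (principalDirections u) := by
  rcases eq_or_ne d 0 with rfl | hd0
  · exact zero_mem_coneHull _
  · simpa [norm_ne_zero_iff.2 hd0] using smul_mem_coneHull (norm_nonneg d)
      (mem_coneHull_of_mem (normalize_mem_principalDirections hχ ha hd0 hd))

variable [FiniteDimensional ℝ E]

lemma exists_successor_of_mem_principalDirections {K : Set (E × E)} (hcl : IsClosed K)
    (hconv : Convex ℝ K) (hu : ∀ n : ℕ, (u n, u (n + 1)) ∈ K)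
    (hrec : ∀ x ∈ coneHull (principalDirections u), ((0 : E), x) ∈ recCone K → x = 0)
    {z : E} (hz : z ∈ principalDirections u) :
    ∃ s ∈ coneHull (principalDirections u), ((z, s) : E × E) ∈ recCone K := by
  obtain ⟨-, φ, hφ, hφnorm, hφdir⟩ := hz
  set q : ℕ → E × E := fun n => (u (φ n), u (φ n + 1))
  have hq : Tendsto (fun n => ‖q n‖) atTop atTop :=
    tendsto_atTop_mono (fun n => norm_fst_le (q n)) hφnorm
  obtain ⟨d, hd1, ψ, hψ, hlim⟩ := exists_subseq_tendsto_normalize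
    ((hq.eventually_gt_atTop 0).mono fun n hn => norm_pos_iff.1 hn)
  have hqψ := hq.comp hψ.tendsto_atTop
  have hdrec : d ∈ recCone K := mem_recCone_of_mem_asymptoticCone hcl hconv
    (mem_asymptoticCone_of_tendsto (fun n => hu (φ (ψ n))) hqψ hlim)
  have hfst : d.1 = ‖d.1‖ • z := eq_norm_smul_of_tendsto (fun n => inv_nonneg.2 (norm_nonneg _))
    (hφdir.comp hψ.tendsto_atTop) ((continuous_fst.tendsto d).comp hlim)
  have hsnd : d.2 ∈ coneHull (principalDirections u) :=
    mem_coneHull_principalDirections_of_tendsto (χ := fun n => φ (ψ n) + 1)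
      (fun m n h => Nat.add_lt_add_right (hφ (hψ h)) 1) hqψ ((continuous_snd.tendsto d).comp hlim)
  have ht : ‖d.1‖ ≠ 0 := by
    intro h0
    have hd₁ : d.1 = 0 := norm_eq_zero.1 h0
    have hd₂ : d.2 = 0 := hrec _ hsnd (by rwa [← hd₁])
    have hd : d = 0 := Prod.ext_iff.2 ⟨hd₁, hd₂⟩
    simp [hd] at hd1
  set t := ‖d.1‖
  refine ⟨t⁻¹ • d.2, smul_mem_coneHull (inv_nonneg.2 (norm_nonneg _)) hsnd, ?_⟩
  have hscale : t⁻¹ • d = (z, t⁻¹ • d.2) := by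
    ext
    · rw [Prod.smul_fst, hfst, smul_smul, inv_mul_cancel₀ ht, one_smul]
    · rfl
  exact hscale ▸ smul_mem_recCone (inv_nonneg.2 (norm_nonneg _)) hdrec

end PrincipalDirections

theorem exists_successor_in_recCone_general
    {E : Type*} [NormedAddCommGroup E] [InnerProductSpace ℝ E] [FiniteDimensional ℝ E]
    (K : Set (E × E)) (hK : IsMWConvex K)
    (u : ℕ → E) (hu : ∀ n : ℕ, (u n, u (n + 1)) ∈ K)
    (hrec : ∀ x ∈ coneHull (principalDirections u), ((0 : E), x) ∈ recCone K → x = 0) :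
    ∀ x ∈ coneHull (principalDirections u),
      ∃ s ∈ coneHull (principalDirections u), ((x, s) : E × E) ∈ recCone K := by
  obtain ⟨hcl, hconv, -⟩ := hK
  refine coneHull_induction ⟨0, zero_mem_coneHull _, zero_mem_recCone K⟩ ?_ ?_
    fun z hz => exists_successor_of_mem_principalDirections hcl hconv hu hrec hz
  · rintro x y ⟨s, hs, hxs⟩ ⟨t, ht, hyt⟩
    exact ⟨s + t, add_mem_coneHull hs ht, add_mem_recCone hxs hyt⟩
  · rintro r x hr ⟨s, hs, hxs⟩
    exact ⟨r • s, smul_mem_coneHull hr hs, smul_mem_recCone hr hxs⟩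

theorem exists_successor_in_recCone
    {E : Type*} [NormedAddCommGroup E] [InnerProductSpace ℝ E] [FiniteDimensional ℝ E]
    (hdim : Module.finrank ℝ E = 2)
    (K : Set (E × E)) (hK : IsMWConvex K)
    (u : ℕ → E) (hu : ∀ n : ℕ, (u n, u (n + 1)) ∈ K)
    (hDne : (principalDirections u).Nonempty)
    (hrec : ∀ x ∈ coneHull (principalDirections u), ((0 : E), x) ∈ recCone K → x = 0) :
    ∀ x ∈ coneHull (principalDirections u),
      ∃ s ∈ coneHull (principalDirections u), ((x, s) : E × E) ∈ recCone K :=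
  exists_successor_in_recCone_general K hK u hu hrec
end
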